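/- arXiv:1409.1329 — 4 statements merged into one kernel-verified Lean document; each statement's English description precedes it below -/
import Mathlib

section
/- Let φ : 𝕂 → 𝕂 be a unital ℂ-linear multiplicative map satisfying φ(T*) = φ(T)* for all T ∈ 𝕂. Then φ is either the identity map or the map γ. In particular, γ is the unique fundamental symmetry on 𝕂. -/
noncomputable section

open scoped Matrix.Norms.L2Operator

/-- Membership in the Kreĭn C*-algebra `𝕂` of matrices `T_{a,b} = !![a, b; b, a]`. -/
def Kmem (M : Matrix (Fin 2) (Fin 2) ℂ) : Prop :=
  M 0 0 = M 1 1 ∧ M 0 1 = M 1 0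

/-- The matrix `T_{a,b} = !![a, b; b, a]`. -/
def Tmat (a b : ℂ) : Matrix (Fin 2) (Fin 2) ℂ := !![a, b; b, a]

/-- The involution of `𝕂`: `T_{a,b}* = T_{conj a, -conj b}`. -/
noncomputable def Kst (M : Matrix (Fin 2) (Fin 2) ℂ) : Matrix (Fin 2) (Fin 2) ℂ :=
  Matrix.of fun i j => if i = j then starRingEnd ℂ (M i j) else -starRingEnd ℂ (M i j)

/-- The fundamental symmetry of `𝕂`: `γ (T_{a,b}) = T_{a,-b}`. -/
def Kgamma (M : Matrix (Fin 2) (Fin 2) ℂ) : Matrix (Fin 2) (Fin 2) ℂ :=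
  Matrix.of fun i j => if i = j then M i j else -M i j

/-- The odd symmetry of `𝕂`: `ε (T_{a,b}) = T_{b,a}`. -/
def Keps (M : Matrix (Fin 2) (Fin 2) ℂ) : Matrix (Fin 2) (Fin 2) ℂ :=
  Matrix.of fun i j => M i (j + 1)

/-!
`𝕂` is spanned by `1` and `E = T_{0,1}`, with `E² = 1` and `E* = -E`. A unital *-endomorphism `φ`
is therefore determined by `φ E = T_{x,y}`, which must again satisfy `T_{x,y}² = 1` and
`T_{x,y}* = -T_{x,y}`: so `xy = 0`, `x² + y² = 1` and `x` is purely imaginary. A purely imaginary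
number has non-positive square, so `x = 0` and `y = ±1`, giving `φ = id` or `φ = γ`. The identity is
not a fundamental symmetry because `T_{1,1}* T_{1,1} = T_{1,-1} T_{1,1} = 0`.
-/

theorem RCLike.mul_self_ne_one_of_conj_eq_neg {K : Type*} [RCLike K] {z : K}
    (h : starRingEnd K z = -z) : z * z ≠ 1 := by
  intro h1
  have h2 : ((‖z‖ ^ 2 : ℝ) : K) = -1 := by
    rw [RCLike.ofReal_pow, ← RCLike.mul_conj, h, mul_neg, h1]
  have h3 : ‖z‖ ^ 2 = -1 := by exact_mod_cast h2
  nlinarith [sq_nonneg ‖z‖]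

theorem Tmat_inj {a b c d : ℂ} : Tmat a b = Tmat c d ↔ a = c ∧ b = d := by
  refine ⟨fun h => ⟨congrFun (congrFun h 0) 0, congrFun (congrFun h 0) 1⟩, ?_⟩
  rintro ⟨rfl, rfl⟩
  rfl

theorem Kmem_Tmat (a b : ℂ) : Kmem (Tmat a b) := by simp [Kmem, Tmat]

theorem Kmem.eq_Tmat {M : Matrix (Fin 2) (Fin 2) ℂ} (h : Kmem M) : M = Tmat (M 0 0) (M 0 1) := by
  ext i j
  fin_cases i <;> fin_cases j <;> simp [Tmat, h.1, h.2]

theorem Tmat_one_zero : Tmat 1 0 = 1 := by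
  ext i j
  fin_cases i <;> fin_cases j <;> simp [Tmat]

theorem smul_Tmat (c a b : ℂ) : c • Tmat a b = Tmat (c * a) (c * b) := by
  ext i j
  fin_cases i <;> fin_cases j <;> simp [Tmat]

theorem Tmat_mul_Tmat (a b c d : ℂ) : Tmat a b * Tmat c d = Tmat (a * c + b * d) (a * d + b * c) := by
  ext i j
  fin_cases i <;> fin_cases j <;> simp [Tmat, Matrix.mul_apply] <;> ring

theorem Kst_Tmat (a b : ℂ) : Kst (Tmat a b) = Tmat (starRingEnd ℂ a) (-starRingEnd ℂ b) := by
  ext i j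
  fin_cases i <;> fin_cases j <;> simp [Kst, Tmat]

theorem Kgamma_Tmat (a b : ℂ) : Kgamma (Tmat a b) = Tmat a (-b) := by
  ext i j
  fin_cases i <;> fin_cases j <;> simp [Kgamma, Tmat]

theorem Kmem.smul {M : Matrix (Fin 2) (Fin 2) ℂ} (h : Kmem M) (c : ℂ) : Kmem (c • M) :=
  ⟨by simp [h.1], by simp [h.2]⟩

theorem Kmem_Kst {M : Matrix (Fin 2) (Fin 2) ℂ} (h : Kmem M) : Kmem (Kst M) := by
  rw [h.eq_Tmat, Kst_Tmat]
  exact Kmem_Tmat _ _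

theorem smul_one_add_smul_Tmat_zero (a b c : ℂ) : a • 1 + b • Tmat 0 c = Tmat a (b * c) := by
  rw [← Tmat_one_zero, smul_Tmat, smul_Tmat]
  ext i j
  fin_cases i <;> fin_cases j <;> simp [Tmat]

theorem eq_zero_and_eq_one_or_neg_one_of_Tmat_mul_self_eq_one {x y : ℂ}
    (hsq : Tmat x y * Tmat x y = 1) (hskew : Kst (Tmat x y) = (-1 : ℂ) • Tmat x y) :
    x = 0 ∧ (y = 1 ∨ y = -1) := by
  rw [Tmat_mul_Tmat, ← Tmat_one_zero, Tmat_inj] at hsq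
  rw [Kst_Tmat, smul_Tmat, Tmat_inj] at hskew
  obtain ⟨hsum, hprod⟩ := hsq
  have hx : x = 0 := by
    by_contra hx
    have hy : y = 0 := by
      have : 2 * x * y = 0 := by linear_combination hprod
      simpa [hx] using this
    exact RCLike.mul_self_ne_one_of_conj_eq_neg (by simpa using hskew.1) (by simpa [hy] using hsum)
  exact ⟨hx, mul_self_eq_one_iff.mp (by simpa [hx] using hsum)⟩

theorem Kst_Tmat_one_one_mul_self : Kst (Tmat 1 1) * Tmat 1 1 = 0 := by
  rw [Kst_Tmat, Tmat_mul_Tmat]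
  ext i j
  fin_cases i <;> fin_cases j <;> simp [Tmat]

section Endomorphism

variable {φ : Matrix (Fin 2) (Fin 2) ℂ → Matrix (Fin 2) (Fin 2) ℂ}

theorem apply_Tmat_zero_one_eq_or
    (hmem : ∀ M, Kmem M → Kmem (φ M))
    (hsmul : ∀ (c : ℂ) (M), Kmem M → φ (c • M) = c • φ M)
    (hmul : ∀ M N, Kmem M → Kmem N → φ (M * N) = φ M * φ N)
    (hone : φ 1 = 1)
    (hstar : ∀ M, Kmem M → φ (Kst M) = Kst (φ M)) :
    φ (Tmat 0 1) = Tmat 0 1 ∨ φ (Tmat 0 1) = Tmat 0 (-1) := by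
  have hE := Kmem_Tmat 0 1
  obtain ⟨x, y, hφE⟩ : ∃ x y, φ (Tmat 0 1) = Tmat x y := ⟨_, _, (hmem _ hE).eq_Tmat⟩
  have hsq : Tmat x y * Tmat x y = 1 := by
    rw [← hφE, ← hmul _ _ hE hE, Tmat_mul_Tmat, ← hone, ← Tmat_one_zero]
    norm_num
  have hskew : Kst (Tmat x y) = (-1 : ℂ) • Tmat x y := by
    rw [← hφE, ← hstar _ hE, ← hsmul _ _ hE, Kst_Tmat, smul_Tmat]
    norm_num
  obtain ⟨rfl, rfl | rfl⟩ := eq_zero_and_eq_one_or_neg_one_of_Tmat_mul_self_eq_one hsq hskew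
  exacts [.inl hφE, .inr hφE]

theorem apply_eq_Tmat_of_apply_Tmat_zero_one
    (hadd : ∀ M N, Kmem M → Kmem N → φ (M + N) = φ M + φ N)
    (hsmul : ∀ (c : ℂ) (M), Kmem M → φ (c • M) = c • φ M)
    (hone : φ 1 = 1) {c : ℂ} (hc : φ (Tmat 0 1) = Tmat 0 c)
    {M : Matrix (Fin 2) (Fin 2) ℂ} (hM : Kmem M) : φ M = Tmat (M 0 0) (M 0 1 * c) := by
  have h1 : Kmem (1 : Matrix (Fin 2) (Fin 2) ℂ) := Tmat_one_zero ▸ Kmem_Tmat 1 0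
  have hE := Kmem_Tmat 0 1
  calc φ M = φ (M 0 0 • 1 + M 0 1 • Tmat 0 1) := by
        rw [smul_one_add_smul_Tmat_zero, mul_one, ← hM.eq_Tmat]
    _ = M 0 0 • 1 + M 0 1 • Tmat 0 c := by
        rw [hadd _ _ (h1.smul _) (hE.smul _), hsmul _ _ h1, hsmul _ _ hE, hone, hc]
    _ = Tmat (M 0 0) (M 0 1 * c) := smul_one_add_smul_Tmat_zero _ _ _

end Endomorphism

/-- Every unital *-endomorphism of `𝕂` is either the identity or `γ`;
in particular `γ` is the unique fundamental symmetry of `𝕂`. -/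
theorem K_endomorphisms_are_id_or_gamma
    (φ : Matrix (Fin 2) (Fin 2) ℂ → Matrix (Fin 2) (Fin 2) ℂ)
    (hmem : ∀ M, Kmem M → Kmem (φ M))
    (hadd : ∀ M N, Kmem M → Kmem N → φ (M + N) = φ M + φ N)
    (hsmul : ∀ (c : ℂ) (M), Kmem M → φ (c • M) = c • φ M)
    (hmul : ∀ M N, Kmem M → Kmem N → φ (M * N) = φ M * φ N)
    (hone : φ 1 = 1)
    (hstar : ∀ M, Kmem M → φ (Kst M) = Kst (φ M)) :
    ((∀ M, Kmem M → φ M = M) ∨ (∀ M, Kmem M → φ M = Kgamma M)) ∧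
    ((∀ M, Kmem M → φ (φ M) = M) →
      (∀ M, Kmem M → ‖φ (Kst M) * M‖ = ‖M‖ ^ 2) →
      ∀ M, Kmem M → φ M = Kgamma M) := by
  have hdich : (∀ M, Kmem M → φ M = M) ∨ (∀ M, Kmem M → φ M = Kgamma M) := by
    rcases apply_Tmat_zero_one_eq_or hmem hsmul hmul hone hstar with hE | hE
    · refine .inl fun M hM => ?_
      rw [apply_eq_Tmat_of_apply_Tmat_zero_one hadd hsmul hone hE hM, mul_one, ← hM.eq_Tmat]
    · refine .inr fun M hM => ?_
      rw [apply_eq_Tmat_of_apply_Tmat_zero_one hadd hsmul hone hE hM, mul_neg_one, ← Kgamma_Tmat, ← hM.eq_Tmat]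
  refine ⟨hdich, fun _ hfund => hdich.resolve_left fun hid => ?_⟩
  have hT := Kmem_Tmat 1 1
  have h := hfund _ hT
  rw [hid _ (Kmem_Kst hT), Kst_Tmat_one_one_mul_self, norm_zero, eq_comm, sq_eq_zero_iff,
    norm_eq_zero] at h
  simpa [Tmat] using congrFun (congrFun h 0) 0
end
end

section
/- Let (A, α) be a unital Kreĭn C*-algebra with fundamental symmetry α and let w be a character on (A, α). Then for every x ∈ A: w(x) = 0 if and only if w(α(x*)·x) = 0. -/
noncomputable section

/-- A character on a Kreĭn C*-algebra `(A, α)`: a unital ℂ-linear multiplicative map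
`w : A → 𝕂` with `w (star x) = (w x)*` and `w ∘ α = γ ∘ w`. -/
def IsKChar {A : Type*} [NormedRing A] [NormedAlgebra ℂ A] [StarRing A]
    (α : A → A) (w : A → Matrix (Fin 2) (Fin 2) ℂ) : Prop :=
  (∀ x, Kmem (w x)) ∧
  (∀ x y, w (x + y) = w x + w y) ∧
  (∀ (c : ℂ) (x : A), w (c • x) = c • w x) ∧
  (∀ x y, w (x * y) = w x * w y) ∧
  w 1 = 1 ∧
  (∀ x, w (star x) = Kst (w x)) ∧
  (∀ x, w (α x) = Kgamma (w x))

/-! Elements of `𝕂` are symmetric matrices, so `γ (M*)` is the conjugate transpose `Mᴴ` and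
`w (α (x*) x) = (w x)ᴴ * w x`; and `Bᴴ * B = 0` forces `B = 0`. -/

open Matrix
open scoped ComplexOrder

theorem Kgamma_Kst (M : Matrix (Fin 2) (Fin 2) ℂ) : Kgamma (Kst M) = M.map (starRingEnd ℂ) := by
  ext i j
  by_cases h : i = j <;> simp [Kgamma, Kst, h]

theorem Kmem.transpose_eq {M : Matrix (Fin 2) (Fin 2) ℂ} (hM : Kmem M) : Mᵀ = M := by
  ext i j
  fin_cases i <;> fin_cases j <;> simp [hM.2]

theorem Kmem.Kgamma_Kst_eq_conjTranspose {M : Matrix (Fin 2) (Fin 2) ℂ} (hM : Kmem M) :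
    Kgamma (Kst M) = Mᴴ := by
  rw [Kgamma_Kst, conjTranspose, hM.transpose_eq]
  rfl

theorem IsKChar.map_alpha_star_mul_self {A : Type*} [NormedRing A] [NormedAlgebra ℂ A]
    [StarRing A] {α : A → A} {w : A → Matrix (Fin 2) (Fin 2) ℂ} (hw : IsKChar α w) (x : A) :
    w (α (star x) * x) = (w x)ᴴ * w x := by
  obtain ⟨hmem, -, -, hwmul, -, hwstar, hwalpha⟩ := hw
  rw [hwmul, hwalpha, hwstar, (hmem x).Kgamma_Kst_eq_conjTranspose]

theorem krein_character_kernel_dagger_general {A : Type*} [NormedRing A] [NormedAlgebra ℂ A]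
    [StarRing A]
(α : A → A)
    (w : A → Matrix (Fin 2) (Fin 2) ℂ) (hw : IsKChar α w) :
    ∀ x : A, w x = 0 ↔ w (α (star x) * x) = 0 := fun x => by
  rw [hw.map_alpha_star_mul_self, conjTranspose_mul_self_eq_zero]

/-- For a character `w` on a unital Kreĭn C*-algebra `(A, α)` and any
`x ∈ A`: `w x = 0` iff `w (α (star x) * x) = 0`. -/
theorem krein_character_kernel_dagger {A : Type*} [NormedRing A] [NormedAlgebra ℂ A]
    [StarRing A] [StarModule ℂ A] [CompleteSpace A]
(α : A → A)
    (hadd : ∀ x y : A, α (x + y) = α x + α y)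
    (hsmul : ∀ (c : ℂ) (x : A), α (c • x) = c • α x)
    (hmul : ∀ x y : A, α (x * y) = α x * α y)
    (hstar : ∀ x : A, α (star x) = star (α x))
    (hinvol : ∀ x : A, α (α x) = x)
    (hfs : ∀ x : A, ‖α (star x) * x‖ = ‖x‖ ^ 2)
    (w : A → Matrix (Fin 2) (Fin 2) ℂ) (hw : IsKChar α w) :
    ∀ x : A, w x = 0 ↔ w (α (star x) * x) = 0 :=
  krein_character_kernel_dagger_general α w hw
end
end

section
/- Let (A, α) be a unital Kreĭn C*-algebra with fundamental symmetry α and let w₁, w₂ be characters on (A, α) whose restrictions to the even part coincide: w₁(a) = w₂(a) for all a ∈ A₊. Then ker(w₁) = ker(w₂). -/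
noncomputable section

/-!
Write `2 x = p + q` with `p = x + α x` even and `q = x - α x` odd. A character sends even
elements to diagonal matrices `T_{a,0}` and odd ones to off-diagonal matrices `T_{0,b}`, so
`w x = 0` iff `w p = 0` and `w q = 0`. The two characters agree on `p` by hypothesis, and on the
even element `q* q`, whose image is `T_{-|b|², 0}` when `w q = T_{0,b}`; hence `|b₁| = |b₂|`.
-/

theorem Kmem.eq_zero_iff {M : Matrix (Fin 2) (Fin 2) ℂ} (hM : Kmem M) :
    M = 0 ↔ M 0 0 = 0 ∧ M 0 1 = 0 := by
  refine ⟨fun h => by simp [h], fun ⟨h00, h01⟩ => ?_⟩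
  ext i j
  fin_cases i <;> fin_cases j
  exacts [h00, h01, hM.2 ▸ h01, hM.1 ▸ h00]

theorem Kgamma_apply_zero_zero (M : Matrix (Fin 2) (Fin 2) ℂ) : Kgamma M 0 0 = M 0 0 := by
  simp [Kgamma]

theorem Kgamma_apply_zero_one (M : Matrix (Fin 2) (Fin 2) ℂ) : Kgamma M 0 1 = -M 0 1 := by
  simp [Kgamma]

theorem Kst_mul_self_apply_zero_zero {M : Matrix (Fin 2) (Fin 2) ℂ} (hM : Kmem M)
    (h00 : M 0 0 = 0) : (Kst M * M) 0 0 = -Complex.normSq (M 0 1) := by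
  rw [Matrix.mul_apply, Fin.sum_univ_two, Complex.normSq_eq_conj_mul_self]
  simp [Kst, h00, ← hM.2]

namespace Function.Involutive

variable {A : Type*} [AddCommGroup A] {α : A → A}

theorem apply_add_self (hα : Involutive α) (hadd : ∀ x y, α (x + y) = α x + α y) (x : A) :
    α (x + α x) = x + α x := by
  rw [hadd, hα, add_comm]

theorem apply_sub_self (hα : Involutive α) (hadd : ∀ x y, α (x + y) = α x + α y) (x : A) :
    α (x - α x) = -(x - α x) := by
  have hsub := (AddMonoidHom.mk' α hadd).map_sub x (α x)
  simp only [AddMonoidHom.mk'_apply] at hsub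
  rw [hsub, hα, neg_sub]

end Function.Involutive

theorem apply_star_mul_self_of_apply_eq_neg {A : Type*} [Ring A] [StarRing A] {α : A → A}
    (hmul : ∀ x y, α (x * y) = α x * α y) (hstar : ∀ x, α (star x) = star (α x))
    {a : A} (ha : α a = -a) : α (star a * a) = star a * a := by
  rw [hmul, hstar, ha, star_neg, neg_mul_neg]

namespace IsKChar

variable {A : Type*} [NormedRing A] [NormedAlgebra ℂ A] [StarRing A] {α : A → A}
  {w : A → Matrix (Fin 2) (Fin 2) ℂ}

theorem map_add (hw : IsKChar α w) (x y : A) : w (x + y) = w x + w y := hw.2.1 x y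

theorem map_mul (hw : IsKChar α w) (x y : A) : w (x * y) = w x * w y := hw.2.2.2.1 x y

theorem map_star (hw : IsKChar α w) (x : A) : w (star x) = Kst (w x) := hw.2.2.2.2.2.1 x

theorem map_fundamentalSymmetry (hw : IsKChar α w) (x : A) : w (α x) = Kgamma (w x) :=
  hw.2.2.2.2.2.2 x

theorem map_neg (hw : IsKChar α w) (x : A) : w (-x) = -w x :=
  (AddMonoidHom.mk' w hw.map_add).map_neg x

theorem apply_zero_one_eq_zero_of_even (hw : IsKChar α w) {a : A} (ha : α a = a) :
    w a 0 1 = 0 := by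
  have h := congrFun₂ (hw.map_fundamentalSymmetry a) 0 1
  rw [ha, Kgamma_apply_zero_one] at h
  linear_combination h / 2

theorem apply_zero_zero_eq_zero_of_odd (hw : IsKChar α w) {a : A} (ha : α a = -a) :
    w a 0 0 = 0 := by
  have h := congrFun₂ (hw.map_fundamentalSymmetry a) 0 0
  rw [ha, hw.map_neg, Kgamma_apply_zero_zero, Matrix.neg_apply] at h
  linear_combination -h / 2

theorem apply_star_mul_self_zero_zero (hw : IsKChar α w) {a : A} (ha : α a = -a) :
    w (star a * a) 0 0 = -Complex.normSq (w a 0 1) := by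
  rw [hw.map_mul, hw.map_star]
  exact Kst_mul_self_apply_zero_zero (hw.1 a) (hw.apply_zero_zero_eq_zero_of_odd ha)

theorem eq_zero_iff (hw : IsKChar α w) (hadd : ∀ x y, α (x + y) = α x + α y)
    (hinvol : Function.Involutive α) (x : A) :
    w x = 0 ↔ w (x + α x) 0 0 = 0 ∧ w (x - α x) 0 1 = 0 := by
  have hsum : w (x + α x) + w (x - α x) = w x + w x := by
    rw [← hw.map_add, ← hw.map_add, add_add_sub_cancel]
  have h00 : w (x + α x) 0 0 = 2 * w x 0 0 := by
    have := congrFun₂ hsum 0 0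
    rw [Matrix.add_apply, Matrix.add_apply,
      hw.apply_zero_zero_eq_zero_of_odd (hinvol.apply_sub_self hadd x)] at this
    linear_combination this
  have h01 : w (x - α x) 0 1 = 2 * w x 0 1 := by
    have := congrFun₂ hsum 0 1
    rw [Matrix.add_apply, Matrix.add_apply,
      hw.apply_zero_one_eq_zero_of_even (hinvol.apply_add_self hadd x)] at this
    linear_combination this
  rw [(hw.1 x).eq_zero_iff, h00, h01]
  simp

end IsKChar

theorem krein_characters_same_even_part_same_kernel_general {A : Type*} [NormedRing A] [NormedAlgebra ℂ A]
    [StarRing A]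
(α : A → A)
    (hadd : ∀ x y : A, α (x + y) = α x + α y)
    (hmul : ∀ x y : A, α (x * y) = α x * α y)
    (hstar : ∀ x : A, α (star x) = star (α x))
    (hinvol : ∀ x : A, α (α x) = x)
    (w₁ w₂ : A → Matrix (Fin 2) (Fin 2) ℂ)
    (hw₁ : IsKChar α w₁) (hw₂ : IsKChar α w₂)
    (heven : ∀ a : A, α a = a → w₁ a = w₂ a) :
    ∀ x : A, w₁ x = 0 ↔ w₂ x = 0 := by
  intro x
  have hodd : α (x - α x) = -(x - α x) := Function.Involutive.apply_sub_self hinvol hadd x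
  have hnormSq : Complex.normSq (w₁ (x - α x) 0 1) = Complex.normSq (w₂ (x - α x) 0 1) := by
    have h := congrFun₂ (heven _ (apply_star_mul_self_of_apply_eq_neg hmul hstar hodd)) 0 0
    rwa [hw₁.apply_star_mul_self_zero_zero hodd, hw₂.apply_star_mul_self_zero_zero hodd,
      neg_inj, Complex.ofReal_inj] at h
  rw [hw₁.eq_zero_iff hadd hinvol, hw₂.eq_zero_iff hadd hinvol,
    heven _ (Function.Involutive.apply_add_self hinvol hadd x),
    ← Complex.normSq_eq_zero (z := w₁ _ 0 1), hnormSq, Complex.normSq_eq_zero]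

/-- Two characters of a unital Kreĭn C*-algebra which agree on the even part
have the same kernel. -/
theorem krein_characters_same_even_part_same_kernel {A : Type*} [NormedRing A] [NormedAlgebra ℂ A]
    [StarRing A] [StarModule ℂ A] [CompleteSpace A]
(α : A → A)
    (hadd : ∀ x y : A, α (x + y) = α x + α y)
    (hsmul : ∀ (c : ℂ) (x : A), α (c • x) = c • α x)
    (hmul : ∀ x y : A, α (x * y) = α x * α y)
    (hstar : ∀ x : A, α (star x) = star (α x))
    (hinvol : ∀ x : A, α (α x) = x)
    (hfs : ∀ x : A, ‖α (star x) * x‖ = ‖x‖ ^ 2)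
    (w₁ w₂ : A → Matrix (Fin 2) (Fin 2) ℂ)
    (hw₁ : IsKChar α w₁) (hw₂ : IsKChar α w₂)
    (heven : ∀ a : A, α a = a → w₁ a = w₂ a) :
    ∀ x : A, w₁ x = 0 ↔ w₂ x = 0 :=
  krein_characters_same_even_part_same_kernel_general α hadd hmul hstar hinvol w₁ w₂ hw₁ hw₂ heven
end
end

section
/- Let (A, α) be a unital commutative imprimitive Kreĭn C*-algebra with fundamental symmetry α and let ε be an odd symmetry compatible with α. Then a character w on (A, α) is even if and only if γ ∘ w is not even; consequently, in each pair {w, γ ∘ w} of characters there is exactly one even character. -/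
noncomputable section

/-- `(A, α)` is imprimitive (full): the norm-closure of the linear span of the products of
odd elements is the whole even part. -/
def Imprimitive {A : Type*} [NormedRing A] [NormedAlgebra ℂ A]
    (α : A → A) : Prop :=
  closure ((Submodule.span ℂ {z : A | ∃ x y, α x = -x ∧ α y = -y ∧ z = x * y} :
      Submodule ℂ A) : Set A)
    = {x : A | α x = x}

/-- A character `w` is even (w.r.t. the odd symmetry `ε`) if `ε_𝕂 ∘ w ∘ ε = w`. -/
def IsEven {A : Type*} (ε : A → A) (w : A → Matrix (Fin 2) (Fin 2) ℂ) : Prop :=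
  ∀ x, Keps (w (ε x)) = w x

/-!
Since `ε (x * y) = x * ε y`, the odd symmetry is multiplication by `e = ε 1`, and
`e * e = ε (ε 1) = 1`. For a character `w`, the anticommutation of `ε` with `α` forces
`γ (w e) = -w e`, so `w e = T_{0,b}` with `b ^ 2 = 1`, and `ε_𝕂 (M * T_{0,b}) = b • M`.
Hence `w` is even iff `b = 1`, while `γ ∘ w`, which sends `e` to `-w e`, is even iff `b = -1`.
-/

section KreinMatrices

theorem Kgamma_mul (M N : Matrix (Fin 2) (Fin 2) ℂ) :
    Kgamma (M * N) = Kgamma M * Kgamma N := by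
  ext i j
  fin_cases i <;> fin_cases j <;> simp [Kgamma, Matrix.mul_apply, Fin.sum_univ_two] <;> ring

theorem Kgamma_one : Kgamma (1 : Matrix (Fin 2) (Fin 2) ℂ) = 1 := by
  ext i j
  fin_cases i <;> fin_cases j <;> simp [Kgamma]

theorem Keps_neg (M : Matrix (Fin 2) (Fin 2) ℂ) : Keps (-M) = -Keps M := by
  ext i j
  simp [Keps]

variable {E : Matrix (Fin 2) (Fin 2) ℂ}

theorem eq_of_Kmem_of_Kgamma_eq_neg (hE : Kmem E) (hodd : Kgamma E = -E) :
    E = !![0, E 0 1; E 0 1, 0] := by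
  have h00 : E 0 0 = 0 := by
    have h := congrFun (congrFun hodd 0) 0
    simp only [Kgamma, Matrix.of_apply, if_true, Matrix.neg_apply] at h
    linear_combination h / 2
  ext i j
  fin_cases i <;> fin_cases j <;> simp [h00, ← hE.1, hE.2]

theorem Keps_mul_of_Kgamma_eq_neg (hE : Kmem E) (hodd : Kgamma E = -E)
    (M : Matrix (Fin 2) (Fin 2) ℂ) : Keps (M * E) = E 0 1 • M := by
  rw [eq_of_Kmem_of_Kgamma_eq_neg hE hodd]
  ext i j
  fin_cases j <;> simp [Keps, Matrix.mul_apply, Fin.sum_univ_two, mul_comm]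

theorem entry_eq_one_or_neg_one_of_Kgamma_eq_neg (hE : Kmem E) (hodd : Kgamma E = -E)
    (hsq : E * E = 1) : E 0 1 = 1 ∨ E 0 1 = -1 := by
  rw [eq_of_Kmem_of_Kgamma_eq_neg hE hodd] at hsq
  have h := congrFun (congrFun hsq 0) 0
  simp only [Matrix.mul_apply, Fin.sum_univ_two] at h
  exact mul_self_eq_one_iff.mp (by simpa using h)

end KreinMatrices

theorem isEven_iff_of_Keps_map_eps {A : Type*} [One A] (ε : A → A)
    (f : A → Matrix (Fin 2) (Fin 2) ℂ) (hf1 : f 1 = 1) (c : ℂ)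
    (hf : ∀ x, Keps (f (ε x)) = c • f x) : IsEven ε f ↔ c = 1 := by
  refine ⟨fun h => ?_, fun hc x => by rw [hf, hc, one_smul]⟩
  have h00 := congrFun (congrFun (h 1) 0) 0
  rw [hf, hf1] at h00
  simpa using h00

theorem eq_mul_map_one {M : Type*} [MulOneClass M] {ε : M → M}
    (hε : ∀ x y, ε (x * y) = x * ε y) (x : M) : ε x = x * ε 1 := by
  rw [← hε, mul_one]

section Character

variable {A : Type*} [NormedRing A] [NormedAlgebra ℂ A] [StarRing A]
  {α : A → A} {w : A → Matrix (Fin 2) (Fin 2) ℂ}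

theorem IsKChar.map_neg_s18 (hw : IsKChar α w) (x : A) : w (-x) = -w x := by
  simpa using hw.2.2.1 (-1) x

theorem IsKChar.Kgamma_map_eps_one (hw : IsKChar α w) {ε : A → A}
    (hεr : ∀ x y, ε (x * y) = x * ε y) (hεα : ∀ x, ε (α x) = -α (ε x)) :
    Kgamma (w (ε 1)) = -w (ε 1) := by
  obtain ⟨-, -, -, wmul, wone, -, walpha⟩ := id hw
  have h : w (ε (α 1)) = -Kgamma (w (ε 1)) := by rw [hεα, hw.map_neg_s18, walpha]
  rw [eq_mul_map_one hεr, wmul, walpha, wone, Kgamma_one, one_mul] at h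
  exact (neg_eq_iff_eq_neg.mpr h).symm

end Character

theorem krein_exactly_one_even_character_general {A : Type*} [NormedRing A] [NormedAlgebra ℂ A]
    [StarRing A]
(α : A → A)
(ε : A → A)
    (heinvol : ∀ x : A, ε (ε x) = x)
    (hemul_r : ∀ x y : A, ε (x * y) = x * ε y)
    (hecompat : ∀ x : A, ε (α x) = -α (ε x))
    (w : A → Matrix (Fin 2) (Fin 2) ℂ) (hw : IsKChar α w) :
    IsEven ε w ↔ ¬ IsEven ε (fun x => Kgamma (w x)) := by
  have hodd := hw.Kgamma_map_eps_one hemul_r hecompat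
  obtain ⟨hmem, -, -, wmul, wone, -, -⟩ := hw
  have hKE := hmem (ε 1)
  generalize hE : w (ε 1) = E at hodd hKE
  have hwε : ∀ x, w (ε x) = w x * E := fun x => by rw [eq_mul_map_one hemul_r x, wmul, hE]
  have hsq : E * E = 1 := by
    rw [← hE, ← wmul, ← eq_mul_map_one hemul_r, heinvol, wone]
  have heven : IsEven ε w ↔ E 0 1 = 1 :=
    isEven_iff_of_Keps_map_eps ε w wone _ fun x => by
      rw [hwε, Keps_mul_of_Kgamma_eq_neg hKE hodd]
  have hγeven : IsEven ε (fun x => Kgamma (w x)) ↔ -E 0 1 = 1 :=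
    isEven_iff_of_Keps_map_eps ε _ (by rw [wone, Kgamma_one]) _ fun x => by
      rw [hwε, Kgamma_mul, hodd, mul_neg, Keps_neg, Keps_mul_of_Kgamma_eq_neg hKE hodd,
        neg_smul]
  rw [heven, hγeven]
  rcases entry_eq_one_or_neg_one_of_Kgamma_eq_neg hKE hodd hsq with h | h <;> norm_num [h]

/-- For a unital commutative imprimitive Kreĭn C*-algebra with a compatible
odd symmetry `ε`, a character `w` is even iff `γ ∘ w` is not even; hence each pair
`{w, γ ∘ w}` contains exactly one even character. -/
theorem krein_exactly_one_even_character {A : Type*} [NormedRing A] [NormedAlgebra ℂ A]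
    [StarRing A] [StarModule ℂ A] [CompleteSpace A]
(α : A → A)
    (hadd : ∀ x y : A, α (x + y) = α x + α y)
    (hsmul : ∀ (c : ℂ) (x : A), α (c • x) = c • α x)
    (hmul : ∀ x y : A, α (x * y) = α x * α y)
    (hstar : ∀ x : A, α (star x) = star (α x))
    (hinvol : ∀ x : A, α (α x) = x)
    (hfs : ∀ x : A, ‖α (star x) * x‖ = ‖x‖ ^ 2)
    (hcomm : ∀ x y : A, x * y = y * x)
    (himp : Imprimitive α)
(ε : A → A)
    (headd : ∀ x y : A, ε (x + y) = ε x + ε y)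
    (hesmul : ∀ (c : ℂ) (x : A), ε (c • x) = c • ε x)
    (heinvol : ∀ x : A, ε (ε x) = x)
    (hestar : ∀ x : A, ε (star x) = -star (ε x))
    (hemul_l : ∀ x y : A, ε (x * y) = ε x * y)
    (hemul_r : ∀ x y : A, ε (x * y) = x * ε y)
    (hecompat : ∀ x : A, ε (α x) = -α (ε x))
    (w : A → Matrix (Fin 2) (Fin 2) ℂ) (hw : IsKChar α w) :
    IsEven ε w ↔ ¬ IsEven ε (fun x => Kgamma (w x)) :=
  krein_exactly_one_even_character_general α ε heinvol hemul_r hecompat w hw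
end
end
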